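/- Let f : Ω×ℝ → ℝ be continuous, let g : ℝ → ℝ be continuous satisfying (g₀), and suppose M, N satisfy (h₁) with exponent α ∈ ℝ and (h₂) with exponent β ∈ ℕ ∪ {0}. If u : Ω → ℝ is a continuous viscosity solution of M(x, Dw, D²w) + g(w) N(x, Dw, D²w) + f(x, w) = 0 in Ω, then v = Φ_g ∘ u is a viscosity solution of M(x, Dw, D²w) + h(x, w) = 0 in Ω, where h(x, s) = e^{(α+β+1)G(Φ_g⁻¹(s))} f(x, Φ_g⁻¹(s)). -/

import Mathlib

open Real Filter Set

/-- Gradient of `u` at `x` (vector of partial derivatives). -/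
noncomputable def vgrad {n : ℕ} (u : (Fin n → ℝ) → ℝ) (x : Fin n → ℝ) : Fin n → ℝ :=
  fun i => fderiv ℝ u x (Pi.single i 1)

/-- Hessian matrix of `u` at `x`. -/
noncomputable def vhess {n : ℕ} (u : (Fin n → ℝ) → ℝ) (x : Fin n → ℝ) :
    Matrix (Fin n) (Fin n) ℝ :=
  Matrix.of fun i j => fderiv ℝ (fun y => fderiv ℝ u y (Pi.single j 1)) x (Pi.single i 1)

noncomputable def Gg (g : ℝ → ℝ) (s : ℝ) : ℝ := ∫ τ in (0:ℝ)..s, g τ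

noncomputable def Phig (g : ℝ → ℝ) (t : ℝ) : ℝ := ∫ s in (0:ℝ)..t, Real.exp (Gg g s)

/-- Condition `(g₀)`. -/
def g0cond (g : ℝ → ℝ) : Prop :=
  ∃ s₀ : ℝ, 0 ≤ s₀ ∧ (∀ s, s₀ ≤ s → 0 ≤ g s) ∧ (∀ s, s ≤ -s₀ → g s ≤ 0)

/-- Viscosity subsolution of `𝓕(x, w, Dw, D²w) = 0` in `Ω`. -/
def ViscositySubsolution {n : ℕ} (Ω : Set (Fin n → ℝ))
    (F : (Fin n → ℝ) → ℝ → (Fin n → ℝ) → Matrix (Fin n) (Fin n) ℝ → ℝ)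
    (w : (Fin n → ℝ) → ℝ) : Prop :=
  ∀ φ : (Fin n → ℝ) → ℝ, ContDiffOn ℝ 2 φ Ω →
    ∀ x₀ ∈ Ω, IsLocalMaxOn (fun x => w x - φ x) Ω x₀ →
      F x₀ (w x₀) (vgrad φ x₀) (vhess φ x₀) ≤ 0

/-- Viscosity supersolution of `𝓕(x, w, Dw, D²w) = 0` in `Ω`. -/
def ViscositySupersolution {n : ℕ} (Ω : Set (Fin n → ℝ))
    (F : (Fin n → ℝ) → ℝ → (Fin n → ℝ) → Matrix (Fin n) (Fin n) ℝ → ℝ)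
    (w : (Fin n → ℝ) → ℝ) : Prop :=
  ∀ φ : (Fin n → ℝ) → ℝ, ContDiffOn ℝ 2 φ Ω →
    ∀ x₀ ∈ Ω, IsLocalMinOn (fun x => w x - φ x) Ω x₀ →
      0 ≤ F x₀ (w x₀) (vgrad φ x₀) (vhess φ x₀)

/-- Viscosity solution: both a viscosity subsolution and a viscosity supersolution. -/
def ViscositySolution {n : ℕ} (Ω : Set (Fin n → ℝ))
    (F : (Fin n → ℝ) → ℝ → (Fin n → ℝ) → Matrix (Fin n) (Fin n) ℝ → ℝ)
    (w : (Fin n → ℝ) → ℝ) : Prop :=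
  ViscositySubsolution Ω F w ∧ ViscositySupersolution Ω F w

/-!
`Φ_g` is a C² diffeomorphism of `ℝ` with `Φ_g' = e^G`. If `φ` touches `v = Φ_g ∘ u` from above
(below) at `x₀`, then `ψ = Φ_g⁻¹ ∘ (φ + c)` touches `u` from above (below) at `x₀`, and with
`λ = e^{-G(u(x₀))}` the chain rule gives `Dψ = λ Dφ` and `D²ψ = λ D²φ - g(u(x₀)) Dψ ⊗ Dψ`.
By (h₂) the rank-one term of `D²ψ` cancels exactly the term `g(u) N`, and by (h₁) what is left is
`λ^{α+β+1} M(x₀, Dφ, D²φ)`. Multiplying the inequality for `u` at `ψ` by `λ^{-(α+β+1)} > 0`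
gives the inequality for `v` at `φ`.
-/

open Topology

theorem contDiff_succ_of_hasDerivAt {f f' : ℝ → ℝ} {k : ℕ} (hf : ∀ s, HasDerivAt f (f' s) s)
    (hf' : ContDiff ℝ k f') : ContDiff ℝ (k + 1) f :=
  contDiff_succ_iff_deriv.2 ⟨fun s => (hf s).differentiableAt, by simp,
    by rwa [show deriv f = f' from funext fun s => (hf s).deriv]⟩

section ChangeOfVariable

variable {g : ℝ → ℝ}

theorem hasDerivAt_Gg (hg : Continuous g) (s : ℝ) : HasDerivAt (Gg g) (g s) s :=
  (hg.integral_hasStrictDerivAt 0 s).hasDerivAt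

theorem contDiff_Gg (hg : Continuous g) : ContDiff ℝ 1 (Gg g) :=
  contDiff_succ_of_hasDerivAt (k := 0) (hasDerivAt_Gg hg) (contDiff_zero.2 hg)

theorem hasDerivAt_Phig (hg : Continuous g) (t : ℝ) :
    HasDerivAt (Phig g) (exp (Gg g t)) t :=
  ((continuous_exp.comp (contDiff_Gg hg).continuous).integral_hasStrictDerivAt 0 t).hasDerivAt

theorem strictMono_Phig (hg : Continuous g) : StrictMono (Phig g) :=
  strictMono_of_deriv_pos fun t => (hasDerivAt_Phig hg t).deriv ▸ exp_pos _

variable {Φinv : ℝ → ℝ}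

theorem monotone_of_rightInverse_Phig (hg : Continuous g)
    (hright : Function.RightInverse Φinv (Phig g)) : Monotone Φinv := fun a b hab =>
  (strictMono_Phig hg).le_iff_le.1 (by rwa [hright a, hright b])

theorem hasDerivAt_of_inverse_Phig (hg : Continuous g) (hleft : Function.LeftInverse Φinv (Phig g))
    (hright : Function.RightInverse Φinv (Phig g)) (s : ℝ) :
    HasDerivAt Φinv (exp (-Gg g (Φinv s))) s := by
  rw [exp_neg]
  exact HasDerivAt.of_local_left_inverse
    ((monotone_of_rightInverse_Phig hg hright).continuous_of_surjective
      hleft.surjective).continuousAt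
    (hasDerivAt_Phig hg (Φinv s)) (exp_ne_zero _) (Eventually.of_forall hright)

theorem hasDerivAt_exp_neg_Gg_comp (hg : Continuous g)
    (hleft : Function.LeftInverse Φinv (Phig g)) (hright : Function.RightInverse Φinv (Phig g))
    (s : ℝ) :
    HasDerivAt (fun s => exp (-Gg g (Φinv s)))
      (-g (Φinv s) * exp (-Gg g (Φinv s)) ^ 2) s := by
  refine (((hasDerivAt_Gg hg (Φinv s)).comp s
    (hasDerivAt_of_inverse_Phig hg hleft hright s)).neg).exp.congr_deriv ?_
  simp only [Function.comp_apply, Pi.neg_apply]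
  ring

theorem contDiff_of_inverse_Phig (hg : Continuous g) (hleft : Function.LeftInverse Φinv (Phig g))
    (hright : Function.RightInverse Φinv (Phig g)) : ContDiff ℝ 2 Φinv := by
  have hderiv := hasDerivAt_of_inverse_Phig hg hleft hright
  have hC1 : ContDiff ℝ 1 Φinv := contDiff_succ_of_hasDerivAt (k := 0) hderiv
    (contDiff_zero.2 (continuous_iff_continuousAt.2 fun s =>
      (hasDerivAt_exp_neg_Gg_comp hg hleft hright s).continuousAt))
  exact contDiff_succ_of_hasDerivAt (k := 1) hderiv
    (contDiff_exp.comp ((contDiff_Gg hg).neg.comp hC1))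

end ChangeOfVariable

section HessianCalculus

variable {n : ℕ} {φ : (Fin n → ℝ) → ℝ} {x : Fin n → ℝ}

theorem vhess_apply_of_differentiableAt (h : DifferentiableAt ℝ (fderiv ℝ φ) x) (i j : Fin n) :
    vhess φ x i j = fderiv ℝ (fderiv ℝ φ) x (Pi.single i 1) (Pi.single j 1) := by
  simp [vhess, fderiv_clm_apply h (differentiableAt_const _)]

theorem ContDiffAt.differentiableAt_fderiv (hφ : ContDiffAt ℝ 2 φ x) :
    DifferentiableAt ℝ (fderiv ℝ φ) x :=
  (hφ.fderiv_right (m := 1) one_add_one_eq_two.le).differentiableAt one_ne_zero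

theorem ContDiffAt.vhess_isSymm (hφ : ContDiffAt ℝ 2 φ x) : (vhess φ x).IsSymm := by
  ext i j
  rw [Matrix.transpose_apply, vhess_apply_of_differentiableAt hφ.differentiableAt_fderiv,
    vhess_apply_of_differentiableAt hφ.differentiableAt_fderiv]
  exact (hφ.isSymmSndFDerivAt (by simp)).eq _ _

theorem vgrad_comp {F : ℝ → ℝ} {F' : ℝ} (hF : HasDerivAt F F' (φ x))
    (hφ : DifferentiableAt ℝ φ x) : vgrad (F ∘ φ) x = F' • vgrad φ x := by
  funext i
  simp [vgrad, (hF.comp_hasFDerivAt x hφ.hasFDerivAt).fderiv]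

theorem vhess_comp {F F' : ℝ → ℝ} {F'' : ℝ} (hF : ∀ s, HasDerivAt F (F' s) s)
    (hF' : HasDerivAt F' F'' (φ x)) (hφ : ContDiffAt ℝ 2 φ x) :
    vhess (F ∘ φ) x = F' (φ x) • vhess φ x + F'' • Matrix.vecMulVec (vgrad φ x) (vgrad φ x) := by
  ext i j
  have hgrad_eq : (fun y => fderiv ℝ (F ∘ φ) y (Pi.single j 1))
      =ᶠ[𝓝 x] fun y => F' (φ y) * fderiv ℝ φ y (Pi.single j 1) := by
    filter_upwards [hφ.eventually (by simp)] with y hy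
    rw [((hF (φ y)).comp_hasFDerivAt y (hy.differentiableAt two_ne_zero).hasFDerivAt).fderiv]
    rfl
  have hpartial : HasFDerivAt (fun y => fderiv ℝ φ y (Pi.single j 1))
      (fderiv ℝ (fun y => fderiv ℝ φ y (Pi.single j 1)) x) x :=
    (hφ.differentiableAt_fderiv.clm_apply (differentiableAt_const _)).hasFDerivAt
  have hprod := ((hF'.comp_hasFDerivAt x
    (hφ.differentiableAt two_ne_zero).hasFDerivAt).mul hpartial).congr_of_eventuallyEq hgrad_eq
  simp only [vhess, vgrad, Matrix.of_apply, hprod.fderiv, FunLike.coe_add, FunLike.coe_smul,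
    Pi.add_apply, Pi.smul_apply, smul_eq_mul, Function.comp_apply, Matrix.add_apply,
    Matrix.smul_apply, Matrix.vecMulVec_apply]
  ring

end HessianCalculus

section StructureConditions

variable {ι : Type*} {M N : (ι → ℝ) → Matrix ι ι ℝ → ℝ} {β : ℕ}

theorem N_smul_add_smul_vecMulVec
    (h2 : ∀ (p : ι → ℝ) (X : Matrix ι ι ℝ), X.IsSymm → ∀ γ : ℝ, γ ≠ 0 → ∀ σ : ℝ,
      M p (γ • X + σ • Matrix.vecMulVec p p) = γ ^ (β + 1) * M p X + σ * γ ^ β * N p X)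
    {p : ι → ℝ} {X : Matrix ι ι ℝ} (hX : X.IsSymm) {γ : ℝ} (hγ : γ ≠ 0) (σ : ℝ) :
    N p (γ • X + σ • Matrix.vecMulVec p p) = γ ^ β * N p X := by
  set Y := γ • X + σ • Matrix.vecMulVec p p
  have hY : Y.IsSymm := (hX.smul γ).add (Matrix.IsSymm.smul (Matrix.transpose_vecMulVec p p) σ)
  -- expand `M p (Y + p ⊗ p)` once with `(γ, σ + 1)` from `X` and once with `(1, 1)` from `Y`
  have hXY : γ • X + (σ + 1) • Matrix.vecMulVec p p
      = (1 : ℝ) • Y + (1 : ℝ) • Matrix.vecMulVec p p := by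
    simp only [Y, one_smul, add_smul]
    abel
  have h := h2 p X hX γ hγ (σ + 1)
  rw [hXY, h2 p Y hY 1 one_ne_zero 1, h2 p X hX γ hγ σ] at h
  linear_combination h

theorem M_add_mul_N_smul_of_homogeneous {α : ℝ}
    (h1 : ∀ lam : ℝ, lam ≠ 0 → ∀ (p : ι → ℝ) (X : Matrix ι ι ℝ),
      X.IsSymm → M (lam • p) X = |lam| ^ α * M p X)
    (h2 : ∀ (p : ι → ℝ) (X : Matrix ι ι ℝ), X.IsSymm → ∀ γ : ℝ, γ ≠ 0 → ∀ σ : ℝ,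
      M p (γ • X + σ • Matrix.vecMulVec p p) = γ ^ (β + 1) * M p X + σ * γ ^ β * N p X)
    {p : ι → ℝ} {X : Matrix ι ι ℝ} (hX : X.IsSymm) {lam : ℝ} (hlam : 0 < lam) (s : ℝ) :
    M (lam • p) (lam • X + (-s) • Matrix.vecMulVec (lam • p) (lam • p))
        + s * N (lam • p) (lam • X + (-s) • Matrix.vecMulVec (lam • p) (lam • p))
      = lam ^ (α + β + 1) * M p X := by
  rw [N_smul_add_smul_vecMulVec h2 hX hlam.ne', h2 _ X hX lam hlam.ne',
    h1 lam hlam.ne' p X hX, abs_of_pos hlam,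
    show α + β + 1 = α + ((β + 1 : ℕ) : ℝ) by push_cast; ring, Real.rpow_add hlam,
    Real.rpow_natCast]
  ring

end StructureConditions

theorem IsLocalMaxOn.sub_comp_of_leftInverse {X : Type*} [TopologicalSpace X] {s : Set X}
    {u φ : X → ℝ} {Φ Θ : ℝ → ℝ} {x₀ : X} (hΘ : Monotone Θ) (hinv : Function.LeftInverse Θ Φ)
    (h : IsLocalMaxOn (fun x => Φ (u x) - φ x) s x₀) :
    IsLocalMaxOn (fun x => u x - Θ (φ x + (Φ (u x₀) - φ x₀))) s x₀ :=
  Eventually.mono h fun x hx => by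
    have := hΘ (show Φ (u x) ≤ φ x + (Φ (u x₀) - φ x₀) by linarith [hx])
    simp only [add_sub_cancel, hinv _] at this ⊢
    linarith

theorem IsLocalMinOn.sub_comp_of_leftInverse {X : Type*} [TopologicalSpace X] {s : Set X}
    {u φ : X → ℝ} {Φ Θ : ℝ → ℝ} {x₀ : X} (hΘ : Monotone Θ) (hinv : Function.LeftInverse Θ Φ)
    (h : IsLocalMinOn (fun x => Φ (u x) - φ x) s x₀) :
    IsLocalMinOn (fun x => u x - Θ (φ x + (Φ (u x₀) - φ x₀))) s x₀ :=
  Eventually.mono h fun x hx => by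
    have := hΘ (show φ x + (Φ (u x₀) - φ x₀) ≤ Φ (u x) by linarith [hx])
    simp only [add_sub_cancel, hinv _] at this ⊢
    linarith

theorem M_add_mul_N_comp_inverse_Phig {n : ℕ}
    {M N : (Fin n → ℝ) → Matrix (Fin n) (Fin n) ℝ → ℝ} {α : ℝ} {β : ℕ} {g Φinv : ℝ → ℝ}
    (hg : Continuous g) (hleft : Function.LeftInverse Φinv (Phig g))
    (hright : Function.RightInverse Φinv (Phig g))
    (h1 : ∀ lam : ℝ, lam ≠ 0 → ∀ (p : Fin n → ℝ) (X : Matrix (Fin n) (Fin n) ℝ),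
      X.IsSymm → M (lam • p) X = |lam| ^ α * M p X)
    (h2 : ∀ (p : Fin n → ℝ) (X : Matrix (Fin n) (Fin n) ℝ), X.IsSymm → ∀ γ : ℝ, γ ≠ 0 →
      ∀ σ : ℝ, M p (γ • X + σ • Matrix.vecMulVec p p) = γ ^ (β + 1) * M p X + σ * γ ^ β * N p X)
    {φ : (Fin n → ℝ) → ℝ} {x : Fin n → ℝ} (hφ : ContDiffAt ℝ 2 φ x) (c : ℝ) :
    M (vgrad ((fun s => Φinv (s + c)) ∘ φ) x) (vhess ((fun s => Φinv (s + c)) ∘ φ) x)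
        + g (Φinv (φ x + c))
          * N (vgrad ((fun s => Φinv (s + c)) ∘ φ) x) (vhess ((fun s => Φinv (s + c)) ∘ φ) x)
      = exp (-Gg g (Φinv (φ x + c))) ^ (α + β + 1) * M (vgrad φ x) (vhess φ x) := by
  set t := Φinv (φ x + c)
  have hF (s : ℝ) : HasDerivAt (fun s => Φinv (s + c)) (exp (-Gg g (Φinv (s + c)))) s :=
    (hasDerivAt_of_inverse_Phig hg hleft hright (s + c)).comp_add_const s c
  have hF' : HasDerivAt (fun s => exp (-Gg g (Φinv (s + c)))) (-g t * exp (-Gg g t) ^ 2) (φ x) :=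
    (hasDerivAt_exp_neg_Gg_comp hg hleft hright (φ x + c)).comp_add_const (φ x) c
  have hvhess : vhess ((fun s => Φinv (s + c)) ∘ φ) x = exp (-Gg g t) • vhess φ x
      + (-g t) • Matrix.vecMulVec (exp (-Gg g t) • vgrad φ x) (exp (-Gg g t) • vgrad φ x) := by
    rw [vhess_comp hF hF' hφ, Matrix.smul_vecMulVec, Matrix.vecMulVec_smul, smul_smul, smul_smul]
    congr 2
    ring
  rw [vgrad_comp (hF _) (hφ.differentiableAt two_ne_zero), hvhess]
  exact M_add_mul_N_smul_of_homogeneous h1 h2 hφ.vhess_isSymm (exp_pos _) _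

theorem stmt7_general {n : ℕ} (Ω : Set (Fin n → ℝ)) (hΩ : IsOpen Ω)
    (f : (Fin n → ℝ) → ℝ → ℝ)
    (g : ℝ → ℝ) (hg : Continuous g)
    (M N : (Fin n → ℝ) → (Fin n → ℝ) → Matrix (Fin n) (Fin n) ℝ → ℝ)
    (α : ℝ) (β : ℕ)
    (h1 : ∀ x ∈ Ω, ∀ lam : ℝ, lam ≠ 0 → ∀ (p : Fin n → ℝ) (X : Matrix (Fin n) (Fin n) ℝ),
      X.IsSymm → M x (lam • p) X = |lam| ^ α * M x p X)
    (h2 : ∀ x ∈ Ω, ∀ (p : Fin n → ℝ) (X : Matrix (Fin n) (Fin n) ℝ), X.IsSymm →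
      ∀ γ : ℝ, γ ≠ 0 → ∀ σ : ℝ,
        M x p (γ • X + σ • Matrix.vecMulVec p p)
          = γ ^ (β + 1) * M x p X + σ * γ ^ β * N x p X)
    (Φinv : ℝ → ℝ) (hleft : ∀ t : ℝ, Φinv (Phig g t) = t)
    (hright : ∀ s : ℝ, Phig g (Φinv s) = s)
    (u : (Fin n → ℝ) → ℝ)
    (hsol : ViscositySolution Ω
      (fun x r p X => M x p X + g r * N x p X + f x r) u) :
    ViscositySolution Ω
      (fun x r p X => M x p X
        + Real.exp ((α + (β : ℝ) + 1) * Gg g (Φinv r)) * f x (Φinv r)) (Phig g ∘ u) := by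
  obtain ⟨hsub, hsup⟩ := hsol
  have hΘ := monotone_of_rightInverse_Phig hg hright
  have hrescale : ∀ φ, ContDiffOn ℝ 2 φ Ω → ∀ x₀ ∈ Ω,
      let ψ := (fun s => Φinv (s + (Phig g (u x₀) - φ x₀))) ∘ φ
      exp ((α + β + 1) * Gg g (u x₀))
          * (M x₀ (vgrad ψ x₀) (vhess ψ x₀) + g (u x₀) * N x₀ (vgrad ψ x₀) (vhess ψ x₀)
            + f x₀ (u x₀))
        = M x₀ (vgrad φ x₀) (vhess φ x₀) + exp ((α + β + 1) * Gg g (Φinv ((Phig g ∘ u) x₀)))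
            * f x₀ (Φinv ((Phig g ∘ u) x₀)) := by
    intro φ hφ x₀ hx₀ ψ
    have ht : Φinv (φ x₀ + (Phig g (u x₀) - φ x₀)) = u x₀ := by rw [add_sub_cancel, hleft]
    have := M_add_mul_N_comp_inverse_Phig hg hleft hright (h1 x₀ hx₀) (h2 x₀ hx₀)
      (hφ.contDiffAt (hΩ.mem_nhds hx₀)) (Phig g (u x₀) - φ x₀)
    rw [ht] at this
    rw [this, Function.comp_apply, hleft, ← exp_mul, mul_add, ← mul_assoc, ← exp_add,
      show (α + β + 1) * Gg g (u x₀) + -Gg g (u x₀) * (α + β + 1) = 0 by ring, exp_zero, one_mul]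
  have hψ : ∀ φ, ContDiffOn ℝ 2 φ Ω → ∀ c, ContDiffOn ℝ 2 ((fun s => Φinv (s + c)) ∘ φ) Ω :=
    fun φ hφ c => ((contDiff_of_inverse_Phig hg hleft hright).comp
      (contDiff_id.add contDiff_const)).comp_contDiffOn hφ
  refine ⟨fun φ hφ x₀ hx₀ hmax => ?_, fun φ hφ x₀ hx₀ hmin => ?_⟩
  · beta_reduce
    rw [← hrescale φ hφ x₀ hx₀]
    exact mul_nonpos_of_nonneg_of_nonpos (exp_pos _).le
      (hsub _ (hψ φ hφ _) x₀ hx₀ (hmax.sub_comp_of_leftInverse hΘ hleft))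
  · beta_reduce
    rw [← hrescale φ hφ x₀ hx₀]
    exact mul_nonneg (exp_pos _).le
      (hsup _ (hψ φ hφ _) x₀ hx₀ (hmin.sub_comp_of_leftInverse hΘ hleft))

/-- Theorem 2, converse direction: if u is a continuous viscosity solution of
M(x,Dw,D²w) + g(w)N(x,Dw,D²w) + f(x,w) = 0 in Ω, then v = Φ_g ∘ u is a viscosity solution of
M(x,Dw,D²w) + h(x,w) = 0 in Ω. -/
theorem stmt7 {n : ℕ} (Ω : Set (Fin n → ℝ)) (hΩ : IsOpen Ω)
    (f : (Fin n → ℝ) → ℝ → ℝ)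
    (hf : ContinuousOn (fun q : (Fin n → ℝ) × ℝ => f q.1 q.2) (Ω ×ˢ Set.univ))
    (g : ℝ → ℝ) (hg : Continuous g) (hg0 : g0cond g)
    (M N : (Fin n → ℝ) → (Fin n → ℝ) → Matrix (Fin n) (Fin n) ℝ → ℝ)
    (hM : ContinuousOn
      (fun q : (Fin n → ℝ) × (Fin n → ℝ) × Matrix (Fin n) (Fin n) ℝ => M q.1 q.2.1 q.2.2)
      (Ω ×ˢ Set.univ))
    (α : ℝ) (β : ℕ)
    (h1 : ∀ x ∈ Ω, ∀ lam : ℝ, lam ≠ 0 → ∀ (p : Fin n → ℝ) (X : Matrix (Fin n) (Fin n) ℝ),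
      X.IsSymm → M x (lam • p) X = |lam| ^ α * M x p X)
    (h2 : ∀ x ∈ Ω, ∀ (p : Fin n → ℝ) (X : Matrix (Fin n) (Fin n) ℝ), X.IsSymm →
      ∀ γ : ℝ, γ ≠ 0 → ∀ σ : ℝ,
        M x p (γ • X + σ • Matrix.vecMulVec p p)
          = γ ^ (β + 1) * M x p X + σ * γ ^ β * N x p X)
    (Φinv : ℝ → ℝ) (hleft : ∀ t : ℝ, Φinv (Phig g t) = t)
    (hright : ∀ s : ℝ, Phig g (Φinv s) = s)
    (u : (Fin n → ℝ) → ℝ) (hu : ContinuousOn u Ω)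
    (hsol : ViscositySolution Ω
      (fun x r p X => M x p X + g r * N x p X + f x r) u) :
    ViscositySolution Ω
      (fun x r p X => M x p X
        + Real.exp ((α + (β : ℝ) + 1) * Gg g (Φinv r)) * f x (Φinv r)) (Phig g ∘ u) :=
  stmt7_general Ω hΩ f g hg M N α β h1 h2 Φinv hleft hright u hsol
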